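/- Let λ_j, λ̃ > 0 and κ̃ ≥ 1 be real numbers, and set c = κ̃^{−2}. Then ∫_{r=0}^{∞} ∫_{u=r}^{∞} 4(πλ_j)^2 · r · u · e^{−πλ_j u^2} · e^{−πλ̃ · max(κ̃ r, u)^2} du dr = λ_j^2 c (λ_j − λ̃(c − 2)) / ( (λ_j + λ̃)^2 (λ̃ + λ_j c) ). (This is the closed form in Lemma 1 for Pr(X^{(j,j)}) in the regime κ̃ = (t^{(j̃)}/t^{(j)})^{1/α} ≥ 1, where c = (t^{(j)}/t^{(j̃)})^{2/α}.) -/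

import Mathlib

/-!
Split the inner integral at `u = κ r`: below it the factor `exp (-πλ̃ κ² r²)` is constant,
above it the two exponentials merge into `exp (-π(λ_j + λ̃) u²)`. Each piece is an elementary
integral of `u exp (-p u²)`, whose primitive is `-exp (-p u²) / (2p)`, and the inner integral
becomes a combination of two functions of the same shape `r exp (-q r²)` in the outer variable,
integrated in turn by the same primitive.
-/

open MeasureTheory Real Set Filter

theorem hasDerivAt_neg_exp_neg_mul_sq_div {b : ℝ} (hb : b ≠ 0) (u : ℝ) :
    HasDerivAt (fun u : ℝ => -exp (-(b * u ^ 2)) / (2 * b)) (u * exp (-(b * u ^ 2))) u := by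
  have h : HasDerivAt (fun u : ℝ => -(b * u ^ 2)) (-(b * (2 * u))) u :=
    (((hasDerivAt_pow 2 u).const_mul b).neg).congr_deriv (by norm_num)
  refine (h.exp.neg.div_const (2 * b)).congr_deriv ?_
  field_simp

theorem integrable_mul_exp_neg_mul_sq' {b : ℝ} (hb : 0 < b) :
    Integrable fun u : ℝ => u * exp (-(b * u ^ 2)) := by
  simpa only [neg_mul] using integrable_mul_exp_neg_mul_sq hb

theorem integral_Ioi_mul_exp_neg_mul_sq {b : ℝ} (hb : 0 < b) (s : ℝ) :
    ∫ u in Ioi s, u * exp (-(b * u ^ 2)) = exp (-(b * s ^ 2)) / (2 * b) := by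
  have hlim : Tendsto (fun u : ℝ => -exp (-(b * u ^ 2)) / (2 * b)) atTop (nhds 0) := by
    have h := tendsto_exp_atBot.comp (tendsto_neg_atTop_atBot.comp
      ((tendsto_pow_atTop two_ne_zero).const_mul_atTop hb))
    simpa using h.neg.div_const (2 * b)
  rw [integral_Ioi_of_hasDerivAt_of_tendsto (by fun_prop)
    (fun u _ => hasDerivAt_neg_exp_neg_mul_sq_div hb.ne' u)
    (integrable_mul_exp_neg_mul_sq' hb).integrableOn hlim]
  ring

theorem integral_Ioc_mul_exp_neg_mul_sq {b x y : ℝ} (hb : b ≠ 0) (hxy : x ≤ y) :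
    ∫ u in Ioc x y, u * exp (-(b * u ^ 2))
      = (exp (-(b * x ^ 2)) - exp (-(b * y ^ 2))) / (2 * b) := by
  have hcont : Continuous fun u : ℝ => u * exp (-(b * u ^ 2)) := by fun_prop
  rw [← intervalIntegral.integral_of_le hxy, intervalIntegral.integral_eq_sub_of_hasDerivAt
    (fun u _ => hasDerivAt_neg_exp_neg_mul_sq_div hb u) (hcont.intervalIntegrable x y)]
  ring

theorem integral_Ioi_mul_exp_neg_mul_sq_mul_exp_neg_mul_max_sq {a b r s : ℝ} (ha : a ≠ 0)
    (hab : 0 < a + b) (hrs : r ≤ s) :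
    ∫ u in Ioi r, u * exp (-(a * u ^ 2)) * exp (-(b * max s u ^ 2))
      = exp (-(b * s ^ 2)) * ((exp (-(a * r ^ 2)) - exp (-(a * s ^ 2))) / (2 * a))
        + exp (-((a + b) * s ^ 2)) / (2 * (a + b)) := by
  have below : EqOn (fun u => u * exp (-(a * u ^ 2)) * exp (-(b * max s u ^ 2)))
      (fun u => exp (-(b * s ^ 2)) * (u * exp (-(a * u ^ 2)))) (Ioc r s) := by
    intro u hu
    simp only [max_eq_left hu.2]
    ring
  have above : EqOn (fun u => u * exp (-(a * u ^ 2)) * exp (-(b * max s u ^ 2)))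
      (fun u => u * exp (-((a + b) * u ^ 2))) (Ioi s) := by
    intro u hu
    simp only [max_eq_right (le_of_lt (mem_Ioi.mp hu)), mul_assoc, ← exp_add]
    ring_nf
  have hcont : Continuous fun u => u * exp (-(a * u ^ 2)) * exp (-(b * max s u ^ 2)) := by
    fun_prop
  rw [← Ioc_union_Ioi_eq_Ioi hrs, setIntegral_union (Ioc_disjoint_Ioi le_rfl) measurableSet_Ioi
      hcont.integrableOn_Ioc ((integrable_mul_exp_neg_mul_sq' hab).integrableOn.congr_fun
        above.symm measurableSet_Ioi),
    setIntegral_congr_fun measurableSet_Ioc below, setIntegral_congr_fun measurableSet_Ioi above,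
    integral_const_mul, integral_Ioc_mul_exp_neg_mul_sq ha hrs,
    integral_Ioi_mul_exp_neg_mul_sq hab]

theorem integral_Ioi_integral_Ioi_exp_neg_mul_max_sq {a b κ : ℝ} (ha : 0 < a) (hb : 0 ≤ b)
    (hκ : 1 ≤ κ) :
    ∫ r in Ioi (0 : ℝ), ∫ u in Ioi r,
        4 * a ^ 2 * r * u * exp (-(a * u ^ 2)) * exp (-(b * max (κ * r) u ^ 2))
      = a / (a + b * κ ^ 2) - a * b / ((a + b) ^ 2 * κ ^ 2) := by
  have hab : 0 < a + b := by positivity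
  have hq₁ : 0 < a + b * κ ^ 2 := by positivity
  have hq₂ : 0 < (a + b) * κ ^ 2 := by positivity
  have inner : EqOn (fun r => ∫ u in Ioi r,
        4 * a ^ 2 * r * u * exp (-(a * u ^ 2)) * exp (-(b * max (κ * r) u ^ 2)))
      (fun r => 2 * a * (r * exp (-((a + b * κ ^ 2) * r ^ 2)))
        - 2 * a * b / (a + b) * (r * exp (-((a + b) * κ ^ 2 * r ^ 2)))) (Ioi 0) := by
    intro r hr
    dsimp only
    have hκr : r ≤ κ * r := le_mul_of_one_le_left (le_of_lt hr) hκ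
    have factor : (fun u => 4 * a ^ 2 * r * u * exp (-(a * u ^ 2))
          * exp (-(b * max (κ * r) u ^ 2)))
        = fun u => 4 * a ^ 2 * r * (u * exp (-(a * u ^ 2)) * exp (-(b * max (κ * r) u ^ 2))) := by
      ext u; ring
    rw [factor, integral_const_mul,
      integral_Ioi_mul_exp_neg_mul_sq_mul_exp_neg_mul_max_sq ha.ne' hab hκr]
    have e₁ : exp (-(b * (κ * r) ^ 2)) * exp (-(a * r ^ 2))
        = exp (-((a + b * κ ^ 2) * r ^ 2)) := by
      rw [← exp_add]; ring_nf
    have e₂ : exp (-(b * (κ * r) ^ 2)) * exp (-(a * (κ * r) ^ 2))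
        = exp (-((a + b) * κ ^ 2 * r ^ 2)) := by
      rw [← exp_add]; ring_nf
    have e₃ : exp (-((a + b) * (κ * r) ^ 2)) = exp (-((a + b) * κ ^ 2 * r ^ 2)) := by ring_nf
    rw [mul_div_assoc', mul_sub, e₁, e₂, e₃]
    field_simp
    ring
  rw [setIntegral_congr_fun measurableSet_Ioi inner, integral_sub
      (((integrable_mul_exp_neg_mul_sq' hq₁).integrableOn).const_mul _)
      (((integrable_mul_exp_neg_mul_sq' hq₂).integrableOn).const_mul _),
    integral_const_mul, integral_const_mul, integral_Ioi_mul_exp_neg_mul_sq hq₁,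
    integral_Ioi_mul_exp_neg_mul_sq hq₂]
  simp only [zero_pow two_ne_zero, mul_zero, neg_zero, exp_zero]
  field_simp

/-- Lemma 1 (case j = m, κ̃ = (t^{(j̃)}/t^{(j)})^{1/α} ≥ 1, c = κ̃⁻²): closed
form of Pr(X^{(j,j)}) as an explicit double integral. -/
theorem stmt_3 (lj lt κ c : ℝ) (hlj : 0 < lj) (hlt : 0 < lt) (hκ : 1 ≤ κ)
    (hc : c = κ ^ (-2 : ℤ)) :
    (∫ r in Ioi (0:ℝ), ∫ u in Ioi r,
      4 * (π * lj) ^ 2 * r * u * Real.exp (-(π * lj * u ^ 2)) *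
        Real.exp (-(π * lt * (max (κ * r) u) ^ 2)))
    = lj ^ 2 * c * (lj - lt * (c - 2)) / ((lj + lt) ^ 2 * (lt + lj * c)) := by
  rw [integral_Ioi_integral_Ioi_exp_neg_mul_max_sq (by positivity) (by positivity) hκ]
  subst hc
  field_simp
  ring
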